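/- For every p∈(1,∞) there exists C=C(p)>0 such that for all s>0 and N≥1 with sN²≤1, and all f∈L^p(𝕋) whose Fourier coefficients vanish for |k|>N, the Fourier multiplier with symbol e^{−isk²}−1+isk² satisfies ‖Σ_{|k|≤N}(e^{−isk²}−1+isk²)f̂_k e^{ikx}‖_{L^p(𝕋)} ≤ C s² ‖J⁴f‖_{L^p(𝕋)}. -/

import Mathlib

/-!
Put `M = ⌊N⌋`, so that `f` is a trigonometric polynomial of degree `M` and `s M² ≤ 1`. Expanding
`e^{-isk²} - 1 + isk² = ∑_{j ≥ 2} (-isk²)^j / j!` reduces the claim to bounds for the multipliers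
`k^{2j}`. These come from Bernstein's inequality `‖∑ k c_k e^{ikx}‖_p ≤ 2M ‖∑ c_k e^{ikx}‖_p`:
multiplying the coefficients by `k` is an average of `3M` translates weighted by samples of the
kernel `(e^{iMt} - e^{-iMt}) |∑_{a<M} e^{iat}|²`, of total mass `2M`. So the `j`-th term costs
`s^j (2M)^{2j-4} / j! ≤ s² 4^{j-2} / j!` times `‖k⁴ f‖_p`, and the series sums to `O(s²)`.
The Taylor remainder of order `2M + 2` and the difference between `k⁴` and `(1 + k²)²` have
coefficients that are `ℓ¹`-small relative to those of `J⁴ f`; they are bounded crudely through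
`‖P‖_p ≤ |𝕋|^{1/p} ∑ |c_k|` and `|ĝ_k| ≤ |𝕋|^{-1/p} ‖g‖_p`.
-/

open MeasureTheory Real Set Filter
open scoped ENNReal

noncomputable section

instance fact2pi : Fact (0 < 2 * π) := ⟨by positivity⟩

abbrev Torus : Type := AddCircle (2 * π)

/-- Fourier multiplier operator with symbol `m`. -/
def mult (m : ℤ → ℂ) (f : Torus → ℂ) : Torus → ℂ :=
  fun x => ∑' k : ℤ, m k * fourierCoeff f k * fourier k x

/-- `J^s`, the Fourier multiplier with symbol `(1+k²)^{s/2}`. -/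
def Jop (s : ℝ) : (Torus → ℂ) → (Torus → ℂ) :=
  mult (fun k => (((1 + (k : ℝ) ^ 2) ^ (s / 2) : ℝ) : ℂ))

open Finset

theorem card_filter_sub_eq (n : ℕ) (d : ℤ) :
    #{ab ∈ range n ×ˢ range n | (ab.1 : ℤ) - ab.2 = d} = n - d.natAbs := by
  have hcard : #{ab ∈ range n ×ˢ range n | (ab.1 : ℤ) - ab.2 = d}
      = #(Finset.Ico (max 0 d) (min (n : ℤ) (n + d))) := by
    apply Finset.card_nbij' (fun ab => (ab.1 : ℤ)) (fun x => (x.toNat, (x - d).toNat))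
    · intro ab hab
      simp only [coe_filter, Finset.mem_product, Finset.mem_range, Set.mem_ofPred_eq] at hab
      simp only [coe_Ico, Set.mem_Ico, max_le_iff, lt_min_iff]
      omega
    · intro x hx
      simp only [coe_Ico, Set.mem_Ico, max_le_iff, lt_min_iff] at hx
      simp only [coe_filter, Finset.mem_product, Finset.mem_range, Set.mem_ofPred_eq]
      omega
    · intro ab hab
      simp only [coe_filter, Finset.mem_product, Finset.mem_range, Set.mem_ofPred_eq] at hab
      exact Prod.ext (by simp) (by simp; omega)
    · intro x hx
      simp only [coe_Ico, Set.mem_Ico, max_le_iff, lt_min_iff] at hx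
      dsimp only
      omega
  rw [hcard, Int.card_Ico]
  omega

theorem sum_Icc_inv_one_add_sq_le (M : ℕ) :
    ∑ k ∈ Finset.Icc (-(M : ℤ)) M, 1 / (1 + (k : ℝ) ^ 2) ≤ 5 - 4 / ((M : ℝ) + 1) := by
  induction M with
  | zero => norm_num
  | succ M ih =>
    have hIcc : Finset.Icc (-((M + 1 : ℕ) : ℤ)) (M + 1 : ℕ)
        = insert (-((M + 1 : ℕ) : ℤ)) (insert ((M + 1 : ℕ) : ℤ) (Finset.Icc (-(M : ℤ)) M)) := by
      ext k
      simp only [Finset.mem_Icc, Finset.mem_insert]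
      omega
    rw [hIcc, Finset.sum_insert (by simp only [Finset.mem_insert, Finset.mem_Icc]; omega),
      Finset.sum_insert (by simp only [Finset.mem_Icc]; omega)]
    have hstep : 2 * (1 / (1 + ((M : ℝ) + 1) ^ 2)) ≤ 4 / ((M : ℝ) + 1) - 4 / ((M : ℝ) + 1 + 1) := by
      rw [div_sub_div _ _ (by positivity) (by positivity), mul_one_div,
        div_le_div_iff₀ (by positivity) (by positivity)]
      nlinarith [(M.cast_nonneg : (0 : ℝ) ≤ M)]
    push_cast
    rw [neg_sq]
    linarith

theorem sum_Icc_two_mul_sq_add_one_div_le (M : ℕ) :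
    ∑ k ∈ Finset.Icc (-(M : ℤ)) M, (2 * (k : ℝ) ^ 2 + 1) / (1 + (k : ℝ) ^ 2) ^ 2 ≤ 10 := by
  have hterm (k : ℤ) :
      (2 * (k : ℝ) ^ 2 + 1) / (1 + (k : ℝ) ^ 2) ^ 2 ≤ 2 * (1 / (1 + (k : ℝ) ^ 2)) := by
    rw [mul_one_div, div_le_div_iff₀ (by positivity) (by positivity)]
    nlinarith [sq_nonneg ((k : ℝ) ^ 2)]
  have hM : (0 : ℝ) ≤ 4 / ((M : ℝ) + 1) := by positivity
  calc _ ≤ ∑ k ∈ Finset.Icc (-(M : ℤ)) M, 2 * (1 / (1 + (k : ℝ) ^ 2)) :=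
        Finset.sum_le_sum fun k _ => hterm k
    _ ≤ 2 * (5 - 4 / ((M : ℝ) + 1)) := by
        rw [← Finset.mul_sum]
        gcongr
        exact sum_Icc_inv_one_add_sq_le M
    _ ≤ 10 := by linarith

theorem norm_exp_sub_sum_range_le {z : ℂ} (hz : ‖z‖ ≤ 1) {n : ℕ} (hn : 2 ≤ n) :
    ‖Complex.exp z - ∑ i ∈ range n, z ^ i / i.factorial‖ ≤ 2 * ‖z‖ ^ 2 / n.factorial := by
  refine (Complex.exp_bound hz (by omega)).trans ?_
  have hfac : (0 : ℝ) < n.factorial := by positivity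
  have hcoef : (n.succ : ℝ) * ((n.factorial : ℝ) * n)⁻¹ ≤ 2 / n.factorial := by
    have h2 : (2 : ℝ) ≤ n := by exact_mod_cast hn
    have hsucc : (n.succ : ℝ) ≤ 2 * n := by
      push_cast
      linarith
    calc (n.succ : ℝ) * ((n.factorial : ℝ) * n)⁻¹ ≤ 2 * n * ((n.factorial : ℝ) * n)⁻¹ := by gcongr
      _ = 2 / n.factorial := by field_simp
  calc ‖z‖ ^ n * ((n.succ : ℝ) * ((n.factorial : ℝ) * n)⁻¹) ≤ ‖z‖ ^ 2 * (2 / n.factorial) :=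
        mul_le_mul (pow_le_pow_of_le_one (norm_nonneg z) hz hn) hcoef (by positivity)
          (by positivity)
    _ = 2 * ‖z‖ ^ 2 / n.factorial := by ring

theorem exp_sub_one_sub_eq (z : ℂ) (m : ℕ) :
    Complex.exp z - 1 - z
      = (Complex.exp z - ∑ i ∈ range (m + 2), z ^ i / i.factorial)
        + ∑ i ∈ range m, z ^ (i + 2) / (i + 2).factorial := by
  simp only [Finset.sum_range_succ', pow_zero, Nat.factorial_zero, Nat.cast_one, div_one]
  ring

theorem sum_range_pow_div_factorial_add_two_le {x : ℝ} (hx : 0 ≤ x) (m : ℕ) :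
    ∑ i ∈ range m, x ^ i / (i + 2).factorial ≤ Real.exp x :=
  (Finset.sum_le_sum fun i _ => by gcongr; omega).trans (Real.sum_le_exp_of_nonneg hx m)

section Translates

variable {G 𝕜 E : Type*} [AddGroup G] [MeasurableSpace G] [MeasurableAdd G]
  {μ : Measure G} [μ.IsAddRightInvariant]
  [NormedField 𝕜] [NormedAddCommGroup E] [NormedSpace 𝕜 E]

theorem eLpNorm_sum_smul_comp_sub_le {ι : Type*} (s : Finset ι) (w : ι → 𝕜) (t : ι → G)
    {g : G → E} (hg : AEStronglyMeasurable g μ) {p : ℝ≥0∞} (hp : 1 ≤ p) :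
    eLpNorm (fun x => ∑ j ∈ s, w j • g (x - t j)) p μ ≤ (∑ j ∈ s, ‖w j‖ₑ) * eLpNorm g p μ := by
  have hsub (j : ι) : MeasurePreserving (· - t j) μ μ := measurePreserving_sub_right μ (t j)
  have hsum : (fun x => ∑ j ∈ s, w j • g (x - t j)) = ∑ j ∈ s, w j • (g ∘ (· - t j)) := by
    ext x
    simp [Finset.sum_apply]
  rw [hsum, Finset.sum_mul]
  refine (eLpNorm_sum_le (fun j _ => (hg.comp_measurePreserving (hsub j)).const_smul _) hp).trans
    (Finset.sum_le_sum fun j _ => ?_)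
  rw [eLpNorm_const_smul, eLpNorm_comp_measurePreserving hg (hsub j)]

end Translates

section TrigPoly

variable {T : ℝ}

theorem norm_fourier_apply (n : ℤ) (x : AddCircle T) : ‖fourier n x‖ = 1 := by
  rw [fourier_apply, Circle.norm_coe]

theorem enorm_fourier_apply (n : ℤ) (x : AddCircle T) : ‖fourier n x‖ₑ = 1 := by
  rw [← ofReal_norm, norm_fourier_apply, ENNReal.ofReal_one]

def trigPoly (M : ℕ) (c : ℤ → ℂ) (x : AddCircle T) : ℂ :=
  ∑ k ∈ Finset.Icc (-(M : ℤ)) M, c k * fourier k x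

variable (M : ℕ)

theorem continuous_trigPoly (c : ℤ → ℂ) : Continuous (trigPoly (T := T) M c) :=
  continuous_finsetSum _ fun k _ => continuous_const.mul (fourier k).continuous

theorem trigPoly_congr {c₁ c₂ : ℤ → ℂ} (h : ∀ k ∈ Finset.Icc (-(M : ℤ)) M, c₁ k = c₂ k) :
    trigPoly (T := T) M c₁ = trigPoly M c₂ := by
  ext x
  exact Finset.sum_congr rfl fun k hk => by rw [h k hk]

theorem trigPoly_sub (c₁ c₂ : ℤ → ℂ) :
    trigPoly (T := T) M (fun k => c₁ k - c₂ k) = trigPoly M c₁ - trigPoly M c₂ := by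
  ext x
  simp only [trigPoly, Pi.sub_apply, sub_mul, Finset.sum_sub_distrib]

theorem trigPoly_add (c₁ c₂ : ℤ → ℂ) :
    trigPoly (T := T) M (fun k => c₁ k + c₂ k) = trigPoly M c₁ + trigPoly M c₂ := by
  ext x
  simp only [trigPoly, Pi.add_apply, add_mul, Finset.sum_add_distrib]

theorem trigPoly_sum {ι : Type*} (s : Finset ι) (c : ι → ℤ → ℂ) :
    trigPoly (T := T) M (fun k => ∑ j ∈ s, c j k) = ∑ j ∈ s, trigPoly M (c j) := by
  ext x
  simp only [trigPoly, Finset.sum_apply, Finset.sum_mul]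
  exact Finset.sum_comm

theorem trigPoly_const_mul (a : ℂ) (c : ℤ → ℂ) :
    trigPoly (T := T) M (fun k => a * c k) = a • trigPoly M c := by
  ext x
  simp only [trigPoly, Pi.smul_apply, smul_eq_mul, Finset.mul_sum, mul_assoc]

theorem trigPoly_apply_sub (c : ℤ → ℂ) (x t : AddCircle T) :
    trigPoly M c (x - t) = trigPoly M (fun k => fourier (-k) t * c k) x := by
  refine Finset.sum_congr rfl fun k _ => ?_
  simp_rw [fourier_apply, smul_sub, sub_eq_add_neg, ← neg_smul, AddCircle.toCircle_add,
    Circle.coe_mul]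
  ring

theorem sum_mul_trigPoly_apply_sub {ι : Type*} (s : Finset ι) (w : ι → ℂ) (t : ι → AddCircle T)
    (c : ℤ → ℂ) (x : AddCircle T) :
    ∑ j ∈ s, w j * trigPoly M c (x - t j)
      = trigPoly M (fun k => (∑ j ∈ s, w j * fourier (-k) (t j)) * c k) x := by
  simp only [trigPoly_apply_sub]
  simp only [trigPoly, Finset.mul_sum, Finset.sum_mul]
  rw [Finset.sum_comm]
  exact Finset.sum_congr rfl fun k _ => Finset.sum_congr rfl fun j _ => by ring

theorem fourierCoeff_trigPoly [Fact (0 < T)] (c : ℤ → ℂ) {k : ℤ}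
    (hk : k ∈ Finset.Icc (-(M : ℤ)) M) : fourierCoeff (trigPoly (T := T) M c) k = c k := by
  have hsum : trigPoly (T := T) M c
      = ∑ j ∈ Finset.Icc (-(M : ℤ)) M, fun x => c j * fourier j x := by
    ext x
    simp only [trigPoly, Finset.sum_apply]
  have hint (j : ℤ) : Integrable (fun x => c j * fourier j x) (AddCircle.haarAddCircle (T := T)) :=
    (continuous_const.mul (fourier j).continuous).integrable_of_hasCompactSupport
      (HasCompactSupport.of_compactSpace _)
  rw [hsum, fourierCoeff.sum _ _ fun j _ => hint j, Finset.sum_apply,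
    Finset.sum_eq_single k (fun j _ hj => ?_) (fun h => absurd hk h)]
  · rw [fourierCoeff.const_mul, fourierCoeff_fourier, Pi.single_eq_same, mul_one]
  · rw [fourierCoeff.const_mul, fourierCoeff_fourier, Pi.single_eq_of_ne' hj, mul_zero]

end TrigPoly

section CoefficientBound

open AddCircle

variable {T : ℝ} [Fact (0 < T)] {p : ℝ≥0∞}

theorem enorm_fourierCoeff_le_eLpNorm {E : Type*} [NormedAddCommGroup E] [NormedSpace ℂ E]
    (hp : 1 ≤ p) {g : AddCircle T → E} (hg : AEStronglyMeasurable g haarAddCircle) (n : ℤ) :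
    ‖fourierCoeff g n‖ₑ ≤ eLpNorm g p haarAddCircle :=
  calc ‖fourierCoeff g n‖ₑ ≤ ∫⁻ x, ‖fourier (-n) x • g x‖ₑ ∂haarAddCircle :=
        enorm_integral_le_lintegral_enorm _
    _ = eLpNorm g 1 haarAddCircle := by
        simp_rw [eLpNorm_one_eq_lintegral_enorm, enorm_smul, enorm_fourier_apply, one_mul]
    _ ≤ eLpNorm g p haarAddCircle := eLpNorm_le_eLpNorm_of_exponent_le hp hg

theorem eLpNorm_trigPoly_haarAddCircle_le (M : ℕ) (c : ℤ → ℂ) :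
    eLpNorm (trigPoly M c) p (haarAddCircle (T := T)) ≤ ∑ k ∈ Finset.Icc (-(M : ℤ)) M, ‖c k‖ₑ := by
  have hbound (x : AddCircle T) : ‖trigPoly M c x‖ₑ ≤ ∑ k ∈ Finset.Icc (-(M : ℤ)) M, ‖c k‖ₑ :=
    (enorm_sum_le _ _).trans_eq <| Finset.sum_congr rfl fun k _ => by
      rw [enorm_mul, enorm_fourier_apply, mul_one]
  simpa using eLpNorm_le_of_ae_enorm_bound (p := p) (ae_of_all haarAddCircle hbound)

theorem eLpNorm_trigPoly_le_of_norm_le (hp : 1 ≤ p) {g : AddCircle T → ℂ}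
    (hg : AEStronglyMeasurable g volume) (M : ℕ) {c : ℤ → ℂ} {σ : ℤ → ℝ}
    (hσ : ∀ k ∈ Finset.Icc (-(M : ℤ)) M, 0 ≤ σ k)
    (hc : ∀ k ∈ Finset.Icc (-(M : ℤ)) M, ‖c k‖ ≤ σ k * ‖fourierCoeff g k‖) :
    eLpNorm (trigPoly M c : AddCircle T → ℂ) p volume
      ≤ ENNReal.ofReal (∑ k ∈ Finset.Icc (-(M : ℤ)) M, σ k) * eLpNorm g p volume := by
  have hg' : AEStronglyMeasurable g haarAddCircle := by
    rw [volume_eq_smul_haarAddCircle] at hg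
    exact hg.mono_ac (Measure.absolutelyContinuous_smul (by simp [Fact.out]))
  have hT : ENNReal.ofReal T ≠ 0 := by simp [Fact.out]
  rw [volume_eq_smul_haarAddCircle, eLpNorm_smul_measure_of_ne_zero hT,
    eLpNorm_smul_measure_of_ne_zero hT, smul_eq_mul, smul_eq_mul, mul_left_comm]
  gcongr
  calc eLpNorm (trigPoly M c) p haarAddCircle
      ≤ ∑ k ∈ Finset.Icc (-(M : ℤ)) M, ‖c k‖ₑ := eLpNorm_trigPoly_haarAddCircle_le M c
    _ ≤ ∑ k ∈ Finset.Icc (-(M : ℤ)) M, ENNReal.ofReal (σ k) * eLpNorm g p haarAddCircle := by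
        gcongr with k hk
        rw [← ofReal_norm]
        refine (ENNReal.ofReal_le_ofReal (hc k hk)).trans ?_
        rw [ENNReal.ofReal_mul (hσ k hk), ofReal_norm]
        gcongr
        exact enorm_fourierCoeff_le_eLpNorm hp hg' k
    _ = ENNReal.ofReal (∑ k ∈ Finset.Icc (-(M : ℤ)) M, σ k) * eLpNorm g p haarAddCircle := by
        rw [ENNReal.ofReal_sum_of_nonneg hσ, Finset.sum_mul]

end CoefficientBound

section Bernstein

open Complex

variable {T : ℝ}

def quadNode (m j : ℕ) : AddCircle T := ((T * j / m : ℝ) : AddCircle T)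

-- Its Fourier coefficient at `r` is `(n - |r - n|)₊ - (n - |r + n|)₊`, which is `r` for `|r| ≤ n`.
def bernsteinKernel (n : ℕ) (t : AddCircle T) : ℂ :=
  (fourier n t - fourier (-n : ℤ) t) * normSq (∑ a ∈ range n, fourier (a : ℤ) t)

theorem fourier_mul_normSq_sum_fourier (r : ℤ) (n : ℕ) (t : AddCircle T) :
    fourier r t * normSq (∑ a ∈ range n, fourier (a : ℤ) t)
      = ∑ a ∈ range n, ∑ b ∈ range n, fourier ((a : ℤ) - b + r) t := by
  rw [← mul_conj, map_sum, Finset.sum_mul_sum, Finset.mul_sum]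
  refine Finset.sum_congr rfl fun a _ => ?_
  rw [Finset.mul_sum]
  refine Finset.sum_congr rfl fun b _ => ?_
  rw [← fourier_neg, ← fourier_add, ← fourier_add, add_comm, sub_eq_add_neg]

variable [Fact (0 < T)]

theorem fourier_quadNode (r : ℤ) (m j : ℕ) :
    fourier r (quadNode m j : AddCircle T) = (exp (2 * π * I / m) ^ r) ^ j := by
  have hT : (T : ℂ) ≠ 0 := ofReal_ne_zero.mpr (Fact.out : 0 < T).ne'
  rw [quadNode, fourier_coe_apply, ← zpow_natCast, ← zpow_mul, ← exp_int_mul]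
  congr 1
  push_cast
  field_simp

theorem sum_fourier_quadNode {r : ℤ} {m : ℕ} (hr : r.natAbs < m) :
    ∑ j ∈ range m, fourier r (quadNode m j : AddCircle T) = if r = 0 then (m : ℂ) else 0 := by
  have hζ := isPrimitiveRoot_exp m (by omega)
  simp only [fourier_quadNode]
  split_ifs with h
  · simp [h]
  · have hz : exp (2 * π * I / m) ^ r ≠ 1 := fun h1 =>
      h (Int.eq_zero_of_abs_lt_dvd ((hζ.zpow_eq_one_iff_dvd r).mp h1)
        (abs_lt.mpr ⟨by omega, by omega⟩))
    have hzm : (exp (2 * π * I / m) ^ r) ^ m = 1 := by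
      rw [← zpow_natCast, ← zpow_mul, hζ.zpow_eq_one_iff_dvd]
      exact dvd_mul_left _ _
    rw [geom_sum_eq hz, hzm, sub_self, zero_div]

theorem sum_quadNode_sum_sum_fourier {n m : ℕ} {r : ℤ} (h : r.natAbs + n ≤ m) :
    ∑ j ∈ range m, ∑ a ∈ range n, ∑ b ∈ range n,
      fourier ((a : ℤ) - b + r) (quadNode m j : AddCircle T) = m * (n - r.natAbs : ℕ) := by
  calc _ = ∑ a ∈ range n, ∑ b ∈ range n, ∑ j ∈ range m,
        fourier ((a : ℤ) - b + r) (quadNode m j : AddCircle T) := by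
        rw [Finset.sum_comm]
        exact Finset.sum_congr rfl fun a _ => Finset.sum_comm
    _ = ∑ ab ∈ range n ×ˢ range n, if (ab.1 : ℤ) - ab.2 = -r then (m : ℂ) else 0 := by
        rw [Finset.sum_product]
        refine Finset.sum_congr rfl fun a ha => Finset.sum_congr rfl fun b hb => ?_
        rw [Finset.mem_range] at ha hb
        rw [sum_fourier_quadNode (by omega)]
        exact if_congr (by omega) rfl rfl
    _ = m * (n - r.natAbs : ℕ) := by
        rw [Finset.sum_ite, Finset.sum_const_zero, add_zero, Finset.sum_const, card_filter_sub_eq,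
          Int.natAbs_neg, nsmul_eq_mul, mul_comm]

theorem sum_bernsteinKernel_mul_fourier {n : ℕ} {k : ℤ} (hk : k.natAbs ≤ n) :
    ∑ j ∈ range (3 * n), bernsteinKernel n (quadNode (3 * n) j : AddCircle T)
      * fourier (-k) (quadNode (3 * n) j : AddCircle T) = (3 * n : ℕ) * k := by
  have hsplit (t : AddCircle T) : bernsteinKernel n t * fourier (-k) t
      = fourier (n - k) t * normSq (∑ a ∈ range n, fourier (a : ℤ) t)
        - fourier (-n - k) t * normSq (∑ a ∈ range n, fourier (a : ℤ) t) := by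
    rw [bernsteinKernel, sub_eq_add_neg (n : ℤ), sub_eq_add_neg (-n : ℤ), fourier_add, fourier_add]
    ring
  simp only [hsplit, fourier_mul_normSq_sum_fourier, Finset.sum_sub_distrib]
  rw [sum_quadNode_sum_sum_fourier (by omega), sum_quadNode_sum_sum_fourier (by omega)]
  have hcount : ((n - (n - k).natAbs : ℕ) : ℤ) - (n - (-n - k).natAbs : ℕ) = k := by omega
  rw [← mul_sub]
  exact_mod_cast congrArg (((3 * n : ℕ) : ℂ) * ·) (congrArg (Int.cast : ℤ → ℂ) hcount)

theorem sum_norm_bernsteinKernel_le (n : ℕ) :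
    ∑ j ∈ range (3 * n), ‖bernsteinKernel n (quadNode (3 * n) j : AddCircle T)‖
      ≤ 2 * (3 * n * n) := by
  have hnormSq : ∑ j ∈ range (3 * n),
      normSq (∑ a ∈ range n, fourier (a : ℤ) (quadNode (3 * n) j : AddCircle T))
        = 3 * n * n := by
    have := sum_quadNode_sum_sum_fourier (T := T) (n := n) (m := 3 * n) (r := 0) (by omega)
    simp only [← fourier_mul_normSq_sum_fourier, fourier_zero, one_mul] at this
    exact_mod_cast this
  rw [← hnormSq, Finset.mul_sum]
  refine Finset.sum_le_sum fun j _ => ?_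
  rw [bernsteinKernel, norm_mul, norm_real, Real.norm_of_nonneg (normSq_nonneg _)]
  refine mul_le_mul_of_nonneg_right ((norm_sub_le _ _).trans ?_) (normSq_nonneg _)
  rw [norm_fourier_apply, norm_fourier_apply, one_add_one_eq_two]

theorem eLpNorm_trigPoly_intCast_mul_le {p : ℝ≥0∞} (hp : 1 ≤ p) (M : ℕ) (c : ℤ → ℂ) :
    eLpNorm (trigPoly M (fun k => k * c k) : AddCircle T → ℂ) p volume
      ≤ ENNReal.ofReal (2 * M) * eLpNorm (trigPoly M c : AddCircle T → ℂ) p volume := by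
  set t : ℕ → AddCircle T := quadNode (3 * M)
  set w : ℕ → ℂ := fun j => bernsteinKernel M (t j) / (3 * M : ℕ)
  have hw : ∀ k ∈ Finset.Icc (-(M : ℤ)) M, (∑ j ∈ range (3 * M), w j * fourier (-k) (t j)) = k := by
    intro k hk
    rw [Finset.mem_Icc] at hk
    rcases Nat.eq_zero_or_pos M with rfl | hM
    · simp [show k = 0 by omega]
    · simp only [w, div_mul_eq_mul_div, ← Finset.sum_div]
      rw [sum_bernsteinKernel_mul_fourier (by omega),
        mul_div_cancel_left₀ _ (Nat.cast_ne_zero.mpr (by omega))]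
  have hrep : (trigPoly M (fun k => k * c k) : AddCircle T → ℂ)
      = fun x => ∑ j ∈ range (3 * M), w j • trigPoly M c (x - t j) := by
    ext x
    simp only [smul_eq_mul, sum_mul_trigPoly_apply_sub]
    exact congrFun (trigPoly_congr M fun k hk => by rw [hw k hk]) x
  have hnorm : ∑ j ∈ range (3 * M), ‖w j‖ₑ ≤ ENNReal.ofReal (2 * M) := by
    simp only [← ofReal_norm, w, norm_div, Complex.norm_natCast]
    rw [← ENNReal.ofReal_sum_of_nonneg fun j _ => by positivity, ← Finset.sum_div]
    refine ENNReal.ofReal_le_ofReal ((div_le_div_of_nonneg_right (sum_norm_bernsteinKernel_le M)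
      (by positivity)).trans ?_)
    rcases Nat.eq_zero_or_pos M with rfl | hM
    · simp
    · apply le_of_eq
      push_cast
      field_simp
  rw [hrep]
  exact (eLpNorm_sum_smul_comp_sub_le _ w t (continuous_trigPoly M c).aestronglyMeasurable hp).trans
    (by gcongr)

end Bernstein

section Schrodinger

open Complex

variable {T : ℝ} [Fact (0 < T)] {p : ℝ≥0∞}

theorem eLpNorm_trigPoly_pow_mul_le (hp : 1 ≤ p) (M : ℕ) (c : ℤ → ℂ) (i : ℕ) :
    eLpNorm (trigPoly M (fun k => (k : ℂ) ^ i * c k) : AddCircle T → ℂ) p volume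
      ≤ ENNReal.ofReal ((2 * M) ^ i) * eLpNorm (trigPoly M c : AddCircle T → ℂ) p volume := by
  induction i with
  | zero => simp
  | succ i ih =>
    calc _ = eLpNorm (trigPoly M (fun k => (k : ℂ) * ((k : ℂ) ^ i * c k)) : AddCircle T → ℂ)
          p volume := by
          rw [trigPoly_congr M (c₂ := fun k => (k : ℂ) * ((k : ℂ) ^ i * c k)) fun k _ => by ring]
      _ ≤ ENNReal.ofReal (2 * M)
          * eLpNorm (trigPoly M (fun k => (k : ℂ) ^ i * c k) : AddCircle T → ℂ) p volume :=
          eLpNorm_trigPoly_intCast_mul_le hp M _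
      _ ≤ ENNReal.ofReal (2 * M) * (ENNReal.ofReal ((2 * M) ^ i)
          * eLpNorm (trigPoly M c : AddCircle T → ℂ) p volume) := by gcongr
      _ = _ := by rw [← mul_assoc, ← ENNReal.ofReal_mul (by positivity), pow_succ']

theorem eLpNorm_trigPoly_pow_four_mul_le (hp : 1 ≤ p) (M : ℕ) (c : ℤ → ℂ) :
    eLpNorm (trigPoly M (fun k => (k : ℂ) ^ 4 * c k) : AddCircle T → ℂ) p volume
      ≤ ENNReal.ofReal 11 * eLpNorm (trigPoly M (fun k => (((1 + (k : ℝ) ^ 2) ^ 2 : ℝ) : ℂ) * c k)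
          : AddCircle T → ℂ) p volume := by
  set g : AddCircle T → ℂ := trigPoly M (fun k => (((1 + (k : ℝ) ^ 2) ^ 2 : ℝ) : ℂ) * c k)
  set h : AddCircle T → ℂ := trigPoly M (fun k => ((2 * (k : ℝ) ^ 2 + 1 : ℝ) : ℂ) * c k)
  have hsplit : (trigPoly M (fun k => (k : ℂ) ^ 4 * c k) : AddCircle T → ℂ) = g - h := by
    rw [← trigPoly_sub]
    exact trigPoly_congr M fun k _ => by push_cast; ring
  have hg : Continuous g := continuous_trigPoly M _
  have hh : eLpNorm h p volume ≤ ENNReal.ofReal 10 * eLpNorm g p volume := by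
    refine (eLpNorm_trigPoly_le_of_norm_le hp hg.aestronglyMeasurable M
      (σ := fun k => (2 * (k : ℝ) ^ 2 + 1) / (1 + (k : ℝ) ^ 2) ^ 2) (fun k _ => by positivity)
      fun k hk => le_of_eq ?_).trans ?_
    · rw [fourierCoeff_trigPoly M _ hk, norm_mul, norm_mul, norm_real, norm_real,
        Real.norm_of_nonneg (by positivity), Real.norm_of_nonneg (by positivity), ← mul_assoc,
        div_mul_cancel₀ _ (by positivity)]
    · gcongr
      exact sum_Icc_two_mul_sq_add_one_div_le M
  calc eLpNorm (trigPoly M (fun k => (k : ℂ) ^ 4 * c k) : AddCircle T → ℂ) p volume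
      ≤ eLpNorm g p volume + eLpNorm h p volume := by
        rw [hsplit]
        exact eLpNorm_sub_le hg.aestronglyMeasurable
          (continuous_trigPoly M _).aestronglyMeasurable hp
    _ ≤ eLpNorm g p volume + ENNReal.ofReal 10 * eLpNorm g p volume := by gcongr
    _ = ENNReal.ofReal 11 * eLpNorm g p volume := by
        rw [show (11 : ℝ) = 1 + 10 by norm_num, ENNReal.ofReal_add zero_le_one (by norm_num),
          add_mul, ENNReal.ofReal_one, one_mul]

theorem norm_neg_I_mul_mul_sq {s : ℝ} (hs : 0 ≤ s) (k : ℤ) :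
    ‖-I * s * (k : ℂ) ^ 2‖ = s * (k : ℝ) ^ 2 := by
  rw [norm_mul, norm_mul, norm_neg, norm_I, one_mul, norm_real, Real.norm_of_nonneg hs, norm_pow,
    ← ofReal_intCast, norm_real, Real.norm_eq_abs, sq_abs]

theorem eLpNorm_trigPoly_exp_sub_taylor_le (hp : 1 ≤ p) {M : ℕ} {s : ℝ} (hs : 0 ≤ s)
    (hsM : s * M ^ 2 ≤ 1) (c : ℤ → ℂ) :
    eLpNorm (trigPoly M (fun k => (exp (-I * s * (k : ℂ) ^ 2)
        - ∑ i ∈ range (2 * M + 2), (-I * s * (k : ℂ) ^ 2) ^ i / i.factorial) * c k)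
          : AddCircle T → ℂ) p volume
      ≤ ENNReal.ofReal (2 * s ^ 2) * eLpNorm (trigPoly M
          (fun k => (((1 + (k : ℝ) ^ 2) ^ 2 : ℝ) : ℂ) * c k) : AddCircle T → ℂ) p volume := by
  -- truncating at order `2M + 2` makes `(2M + 2)!` exceed the number `2M + 1` of frequencies
  set n := 2 * M + 2
  set g : AddCircle T → ℂ := trigPoly M (fun k => (((1 + (k : ℝ) ^ 2) ^ 2 : ℝ) : ℂ) * c k)
  have hg : Continuous g := continuous_trigPoly M _
  refine (eLpNorm_trigPoly_le_of_norm_le hp hg.aestronglyMeasurable M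
    (σ := fun _ => 2 * s ^ 2 / n.factorial) (fun _ _ => by positivity) fun k hk => ?_).trans ?_
  · have hk2 : (k : ℝ) ^ 2 ≤ M ^ 2 := by
      rw [Finset.mem_Icc] at hk
      exact sq_le_sq' (by exact_mod_cast hk.1) (by exact_mod_cast hk.2)
    have hz : ‖-I * s * (k : ℂ) ^ 2‖ ≤ 1 := by
      rw [norm_neg_I_mul_mul_sq hs]
      nlinarith
    rw [fourierCoeff_trigPoly M _ hk, norm_mul, norm_mul, norm_real,
      Real.norm_of_nonneg (by positivity), ← mul_assoc]
    gcongr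
    calc _ ≤ 2 * ‖-I * s * (k : ℂ) ^ 2‖ ^ 2 / n.factorial := norm_exp_sub_sum_range_le hz (by omega)
      _ = 2 * s ^ 2 / n.factorial * ((k : ℝ) ^ 2) ^ 2 := by
          rw [norm_neg_I_mul_mul_sq hs]
          ring
      _ ≤ 2 * s ^ 2 / n.factorial * (1 + (k : ℝ) ^ 2) ^ 2 := by gcongr; linarith
  · gcongr
    have hcard : #(Finset.Icc (-(M : ℤ)) M) ≤ n.factorial :=
      (show #(Finset.Icc (-(M : ℤ)) M) ≤ n by rw [Int.card_Icc]; omega).trans n.self_le_factorial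
    rw [Finset.sum_const, nsmul_eq_mul]
    calc (#(Finset.Icc (-(M : ℤ)) M) : ℝ) * (2 * s ^ 2 / n.factorial)
        ≤ n.factorial * (2 * s ^ 2 / n.factorial) := by gcongr
      _ = 2 * s ^ 2 := mul_div_cancel₀ _ (by positivity)

theorem eLpNorm_trigPoly_taylor_term_le (hp : 1 ≤ p) {M : ℕ} {s : ℝ} (hs : 0 ≤ s)
    (hsM : s * M ^ 2 ≤ 1) (c : ℤ → ℂ) (i : ℕ) :
    eLpNorm (trigPoly M (fun k => (-I * s * (k : ℂ) ^ 2) ^ (i + 2) / (i + 2).factorial * c k)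
          : AddCircle T → ℂ) p volume
      ≤ ENNReal.ofReal (11 * s ^ 2 * (4 ^ i / (i + 2).factorial)) * eLpNorm (trigPoly M
          (fun k => (((1 + (k : ℝ) ^ 2) ^ 2 : ℝ) : ℂ) * c k) : AddCircle T → ℂ) p volume := by
  set L := eLpNorm (trigPoly M (fun k => (((1 + (k : ℝ) ^ 2) ^ 2 : ℝ) : ℂ) * c k)
    : AddCircle T → ℂ) p volume
  have hfactor : (trigPoly M (fun k => (-I * s * (k : ℂ) ^ 2) ^ (i + 2) / (i + 2).factorial * c k)
      : AddCircle T → ℂ) = ((-I * s) ^ (i + 2) / (i + 2).factorial)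
        • trigPoly M (fun k => (k : ℂ) ^ (2 * i) * ((k : ℂ) ^ 4 * c k)) := by
    rw [← trigPoly_const_mul]
    exact trigPoly_congr M fun k _ => by ring
  have hcoef : ‖(-I * s) ^ (i + 2) / ((i + 2).factorial : ℂ)‖ₑ
      = ENNReal.ofReal (s ^ (i + 2) / (i + 2).factorial) := by
    rw [← ofReal_norm, norm_div, norm_pow, norm_mul, norm_neg, norm_I, one_mul, norm_real,
      Real.norm_of_nonneg hs, Complex.norm_natCast]
  have hreal : s ^ (i + 2) / (i + 2).factorial * ((2 * M) ^ (2 * i) * 11)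
      ≤ 11 * s ^ 2 * (4 ^ i / (i + 2).factorial) := by
    have hpow : s ^ (i + 2) * (2 * M) ^ (2 * i) ≤ s ^ 2 * 4 ^ i := by
      calc s ^ (i + 2) * (2 * M) ^ (2 * i) = s ^ 2 * (4 * (s * M ^ 2)) ^ i := by
            rw [pow_mul]
            ring
        _ ≤ s ^ 2 * 4 ^ i := by gcongr; linarith
    calc s ^ (i + 2) / (i + 2).factorial * ((2 * M) ^ (2 * i) * 11)
        = 11 * (s ^ (i + 2) * (2 * M) ^ (2 * i)) / (i + 2).factorial := by ring
      _ ≤ 11 * (s ^ 2 * 4 ^ i) / (i + 2).factorial := by gcongr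
      _ = 11 * s ^ 2 * (4 ^ i / (i + 2).factorial) := by ring
  calc _ = ENNReal.ofReal (s ^ (i + 2) / (i + 2).factorial)
        * eLpNorm (trigPoly M (fun k => (k : ℂ) ^ (2 * i) * ((k : ℂ) ^ 4 * c k))
          : AddCircle T → ℂ) p volume := by
        rw [hfactor, eLpNorm_const_smul, hcoef]
    _ ≤ ENNReal.ofReal (s ^ (i + 2) / (i + 2).factorial)
        * (ENNReal.ofReal ((2 * M) ^ (2 * i)) * (ENNReal.ofReal 11 * L)) := by
        gcongr
        exact (eLpNorm_trigPoly_pow_mul_le hp M _ _).trans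
          (by gcongr; exact eLpNorm_trigPoly_pow_four_mul_le hp M c)
    _ = ENNReal.ofReal (s ^ (i + 2) / (i + 2).factorial * ((2 * M) ^ (2 * i) * 11)) * L := by
        rw [ENNReal.ofReal_mul (by positivity), ENNReal.ofReal_mul (by positivity), mul_assoc,
          mul_assoc]
    _ ≤ _ := by gcongr

theorem eLpNorm_trigPoly_schrodinger_le (hp : 1 ≤ p) {M : ℕ} {s : ℝ} (hs : 0 ≤ s)
    (hsM : s * M ^ 2 ≤ 1) (c : ℤ → ℂ) :
    eLpNorm (trigPoly M (fun k => (exp (-I * s * (k : ℂ) ^ 2) - 1 + I * s * (k : ℂ) ^ 2) * c k)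
          : AddCircle T → ℂ) p volume
      ≤ ENNReal.ofReal ((11 * Real.exp 4 + 2) * s ^ 2) * eLpNorm (trigPoly M
          (fun k => (((1 + (k : ℝ) ^ 2) ^ 2 : ℝ) : ℂ) * c k) : AddCircle T → ℂ) p volume := by
  set L := eLpNorm (trigPoly M (fun k => (((1 + (k : ℝ) ^ 2) ^ 2 : ℝ) : ℂ) * c k)
    : AddCircle T → ℂ) p volume
  set R : AddCircle T → ℂ := trigPoly M fun k => (exp (-I * s * (k : ℂ) ^ 2)
    - ∑ i ∈ range (2 * M + 2), (-I * s * (k : ℂ) ^ 2) ^ i / i.factorial) * c k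
  set S : ℕ → AddCircle T → ℂ := fun i =>
    trigPoly M fun k => (-I * s * (k : ℂ) ^ 2) ^ (i + 2) / (i + 2).factorial * c k
  have hsplit : (trigPoly M (fun k => (exp (-I * s * (k : ℂ) ^ 2) - 1 + I * s * (k : ℂ) ^ 2)
      * c k) : AddCircle T → ℂ) = R + ∑ i ∈ range (2 * M), S i := by
    rw [← trigPoly_sum, ← trigPoly_add]
    refine trigPoly_congr M fun k _ => ?_
    rw [← Finset.sum_mul, ← add_mul, ← exp_sub_one_sub_eq]
    ring
  have hS : eLpNorm (∑ i ∈ range (2 * M), S i) p volume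
      ≤ ENNReal.ofReal (11 * Real.exp 4 * s ^ 2) * L :=
    calc eLpNorm (∑ i ∈ range (2 * M), S i) p volume
        ≤ ∑ i ∈ range (2 * M), eLpNorm (S i) p volume :=
          eLpNorm_sum_le (fun i _ => (continuous_trigPoly M _).aestronglyMeasurable) hp
      _ ≤ ∑ i ∈ range (2 * M), ENNReal.ofReal (11 * s ^ 2 * (4 ^ i / (i + 2).factorial)) * L :=
          Finset.sum_le_sum fun i _ => eLpNorm_trigPoly_taylor_term_le hp hs hsM c i
      _ = ENNReal.ofReal (11 * s ^ 2 * ∑ i ∈ range (2 * M), (4 : ℝ) ^ i / (i + 2).factorial)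
          * L := by
          rw [← Finset.sum_mul, ← ENNReal.ofReal_sum_of_nonneg fun i _ => by positivity,
            Finset.mul_sum]
      _ ≤ ENNReal.ofReal (11 * Real.exp 4 * s ^ 2) * L := by
          rw [mul_right_comm]
          gcongr
          exact sum_range_pow_div_factorial_add_two_le (by norm_num) _
  calc _ ≤ eLpNorm R p volume + eLpNorm (∑ i ∈ range (2 * M), S i) p volume := by
        rw [hsplit]
        exact eLpNorm_add_le (continuous_trigPoly M _).aestronglyMeasurable
          (Finset.aestronglyMeasurable_sum _ fun i _ =>
            (continuous_trigPoly M _).aestronglyMeasurable) hp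
    _ ≤ ENNReal.ofReal (2 * s ^ 2) * L + ENNReal.ofReal (11 * Real.exp 4 * s ^ 2) * L :=
        add_le_add (eLpNorm_trigPoly_exp_sub_taylor_le hp hs hsM c) hS
    _ = _ := by
        rw [← add_mul, ← ENNReal.ofReal_add (by positivity) (by positivity)]
        ring_nf

end Schrodinger

theorem mult_eq_trigPoly (m : ℤ → ℂ) {f : Torus → ℂ} {M : ℕ}
    (hf : ∀ k ∉ Finset.Icc (-(M : ℤ)) M, fourierCoeff f k = 0) :
    mult m f = trigPoly M (fun k => m k * fourierCoeff f k) := by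
  ext x
  exact tsum_eq_sum fun k hk => by rw [hf k hk, mul_zero, zero_mul]

theorem Jop_four_eq_trigPoly {f : Torus → ℂ} {M : ℕ}
    (hf : ∀ k ∉ Finset.Icc (-(M : ℤ)) M, fourierCoeff f k = 0) :
    Jop 4 f = trigPoly M (fun k => (((1 + (k : ℝ) ^ 2) ^ 2 : ℝ) : ℂ) * fourierCoeff f k) := by
  rw [Jop, mult_eq_trigPoly _ hf, show (4 : ℝ) / 2 = (2 : ℕ) by norm_num]
  simp only [Real.rpow_natCast]

theorem multiplier_Ts_bound_general (p : ℝ≥0∞) (hp1 : 1 < p) :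
    ∃ C : ℝ, 0 < C ∧
      ∀ (s N : ℝ), 0 < s → 1 ≤ N → s * N ^ 2 ≤ 1 →
        ∀ f : Torus → ℂ, MemLp f p volume →
          (∀ k : ℤ, N < (|k| : ℝ) → fourierCoeff f k = 0) →
          eLpNorm (mult (fun k => if (|k| : ℝ) ≤ N then
              Complex.exp (-Complex.I * s * (k : ℂ) ^ 2) - 1 + Complex.I * s * (k : ℂ) ^ 2
            else 0) f) p volume
            ≤ ENNReal.ofReal (C * s ^ 2) * eLpNorm (Jop 4 f) p volume := by
  refine ⟨11 * Real.exp 4 + 2, by positivity, fun s N hs hN hsN f _ hvanish => ?_⟩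
  set M := ⌊N⌋₊
  have hMN : (M : ℝ) ≤ N := Nat.floor_le (by linarith)
  have hsM : s * M ^ 2 ≤ 1 := le_trans (by gcongr) hsN
  have habs {k : ℤ} : k ∈ Finset.Icc (-(M : ℤ)) M ↔ (|k| : ℝ) ≤ M := by
    rw [Finset.mem_Icc, ← abs_le, ← Int.cast_abs]
    norm_cast
  have hf : ∀ k ∉ Finset.Icc (-(M : ℤ)) M, fourierCoeff f k = 0 := fun k hk => by
    refine hvanish k ((Nat.lt_floor_add_one N).trans_le ?_)
    rw [habs, not_le, ← Int.cast_abs] at hk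
    rw [← Int.cast_abs]
    exact_mod_cast hk
  rw [mult_eq_trigPoly _ hf, Jop_four_eq_trigPoly hf,
    trigPoly_congr M fun k hk => by rw [if_pos ((habs.mp hk).trans hMN)]]
  exact eLpNorm_trigPoly_schrodinger_le hp1.le hs.le hsM _

theorem multiplier_Ts_bound (p : ℝ≥0∞) (hp1 : 1 < p) (hp2 : p ≠ ∞) :
    ∃ C : ℝ, 0 < C ∧
      ∀ (s N : ℝ), 0 < s → 1 ≤ N → s * N ^ 2 ≤ 1 →
        ∀ f : Torus → ℂ, MemLp f p volume →
          (∀ k : ℤ, N < (|k| : ℝ) → fourierCoeff f k = 0) →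
          eLpNorm (mult (fun k => if (|k| : ℝ) ≤ N then
              Complex.exp (-Complex.I * s * (k : ℂ) ^ 2) - 1 + Complex.I * s * (k : ℂ) ^ 2
            else 0) f) p volume
            ≤ ENNReal.ofReal (C * s ^ 2) * eLpNorm (Jop 4 f) p volume :=
  multiplier_Ts_bound_general p hp1
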